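/- arXiv:1910.13570 — 4 statements merged into one kernel-verified Lean document; each statement's English description precedes it below -/
import Mathlib

section
/- Let p be a random variable taking values in [0,1] and let a ∈ (0,1). Define the expected loss L(a) = E[((p - a)/min(a, 1-a))^2]. Then L is minimized over a ∈ (0,1) at a₀ = min(E[p] + Var(p)/E[p], 1/2) when E[p] ≤ 1/2, and at a₀ = max(1/2, E[p] - Var(p)/(1 - E[p])) when E[p] > 1/2. -/
open MeasureTheory

/-- The objective as a function of the mean `m`, variance `v` and point `a`. -/
noncomputable def ecapF (m v a : ℝ) : ℝ := (v + (m - a) ^ 2) / (min a (1 - a)) ^ 2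

lemma ecapF_mirror (m v a : ℝ) : ecapF m v a = ecapF (1 - m) v (1 - a) := by
  unfold ecapF
  have h : (1 : ℝ) - (1 - a) = a := by ring
  rw [h, min_comm]
  ring_nf

/-- Monotone decrease of the objective on `(0, S/m] ∩ (0, 1/2]`. -/
lemma ecapF_dec (m v a b : ℝ) (hm0 : 0 < m) (hv : 0 ≤ v) (ha : 0 < a)
    (hab : a ≤ b) (hb2 : b ≤ 1 / 2) (hbS : m * b ≤ v + m ^ 2) :
    ecapF m v b ≤ ecapF m v a := by
  unfold ecapF
  rw [min_eq_left (by linarith), min_eq_left (by linarith)]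
  rw [div_le_div_iff₀ (pow_pos (lt_of_lt_of_le ha hab) 2) (pow_pos ha 2)]
  nlinarith [mul_nonneg (sub_nonneg.2 hab) (sub_nonneg.2 hbS),
    mul_nonneg hv (mul_nonneg (sub_nonneg.2 hab) (add_pos ha (lt_of_lt_of_le ha hab)).le),
    mul_pos ha (lt_of_lt_of_le ha hab), sq_nonneg (b - a)]

/-- Global lower bound: the objective at `a* = m + v/m` is a minimum (when `a* ≤ 1/2`). -/
lemma ecapF_min (m v a : ℝ) (hm0 : 0 < m) (hv : 0 ≤ v) (ha : 0 < a)
    (ha2 : a ≤ 1 / 2) (hstar : m + v / m ≤ 1 / 2) :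
    ecapF m v (m + v / m) ≤ ecapF m v a := by
  have hvm : 0 ≤ v / m := div_nonneg hv hm0.le
  have hs0 : 0 < m + v / m := by linarith
  unfold ecapF
  rw [min_eq_left (by linarith), min_eq_left (by linarith)]
  rw [div_le_div_iff₀ (pow_pos hs0 2) (pow_pos ha 2)]
  set t : ℝ := v / m with htdef
  have ht0 : 0 ≤ t := hvm
  rw [show v = t * m from (div_mul_cancel₀ v hm0.ne').symm.trans (by rw [htdef])]
  nlinarith [mul_nonneg (mul_nonneg (add_nonneg hm0.le ht0) hm0.le) (sq_nonneg (m + t - a))]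

/-- Core real-variable lemma, for the case `m ≤ 1/2`. -/
lemma ecap_core (m v : ℝ) (hm0 : 0 < m) (hm : m ≤ 1 / 2) (hv : 0 ≤ v) :
    min (m + v / m) (1 / 2) ∈ Set.Ioo (0 : ℝ) 1 ∧
      ∀ a ∈ Set.Ioo (0 : ℝ) 1, ecapF m v (min (m + v / m) (1 / 2)) ≤ ecapF m v a := by
  have hvm : 0 ≤ v / m := div_nonneg hv hm0.le
  set A : ℝ := min (m + v / m) (1 / 2) with hA
  have hA0 : 0 < A := lt_min (by linarith) (by norm_num)
  have hA2 : A ≤ 1 / 2 := min_le_right _ _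
  have key : ∀ a : ℝ, 0 < a → a ≤ 1 / 2 → ecapF m v A ≤ ecapF m v a := by
    intro a ha ha2
    rcases le_or_gt (m + v / m) (1 / 2) with h | h
    · rw [hA, min_eq_left h]
      exact ecapF_min m v a hm0 hv ha ha2 h
    · rw [hA, min_eq_right h.le]
      have h' : (1 / 2 - m) * m < v := by
        have : (1 : ℝ) / 2 - m < v / m := by linarith
        exact (lt_div_iff₀ hm0).mp this
      exact ecapF_dec m v a (1 / 2) hm0 hv ha ha2 le_rfl (by nlinarith)
  refine ⟨⟨hA0, by linarith⟩, ?_⟩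
  rintro a ⟨ha0, ha1⟩
  rcases le_or_gt a (1 / 2) with h | h
  · exact key a ha0 h
  · -- a > 1/2 : reflect
    have h1m : 0 < 1 - m := by linarith
    have hdec : ecapF (1 - m) v (1 - (1 / 2 : ℝ)) ≤ ecapF (1 - m) v (1 - a) := by
      apply ecapF_dec (1 - m) v (1 - a) (1 - 1 / 2) h1m hv (by linarith) (by linarith)
        (by norm_num)
      nlinarith
    have e1 : ecapF m v a = ecapF (1 - m) v (1 - a) := ecapF_mirror m v a
    have e2 : ecapF m v (1 / 2) = ecapF (1 - m) v (1 - (1 / 2 : ℝ)) :=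
      ecapF_mirror m v (1 / 2)
    have := key (1 / 2) (by norm_num) le_rfl
    rw [e1]
    calc ecapF m v A ≤ ecapF m v (1 / 2) := this
      _ = ecapF (1 - m) v (1 - (1 / 2 : ℝ)) := e2
      _ ≤ ecapF (1 - m) v (1 - a) := hdec

/-- Oracle theorem: the expected relative squared-error loss
`L(a) = E[((p - a)/min(a,1-a))^2]` over `a ∈ (0,1)` is minimized at
`a₀ = min(E[p] + Var(p)/E[p], 1/2)` when `E[p] ≤ 1/2` and at
`a₀ = max(1/2, E[p] - Var(p)/(1 - E[p]))` when `E[p] > 1/2`. -/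
theorem oracle_minimizer {Ω : Type*} [MeasurableSpace Ω] (μ : Measure Ω)
    [IsProbabilityMeasure μ] (p : Ω → ℝ) (hm : Measurable p)
    (hp : ∀ ω, p ω ∈ Set.Icc (0 : ℝ) 1)
    (hE0 : 0 < ∫ ω, p ω ∂μ) (hE1 : (∫ ω, p ω ∂μ) < 1)
    (L : ℝ → ℝ)
    (hL : ∀ a, L a = ∫ ω, ((p ω - a) / min a (1 - a)) ^ 2 ∂μ)
    (a₀ : ℝ)
    (ha₀ : a₀ = if (∫ ω, p ω ∂μ) ≤ 1 / 2 then
        min ((∫ ω, p ω ∂μ) +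
          (∫ ω, (p ω - ∫ ω', p ω' ∂μ) ^ 2 ∂μ) / (∫ ω, p ω ∂μ)) (1 / 2)
      else
        max (1 / 2) ((∫ ω, p ω ∂μ) -
          (∫ ω, (p ω - ∫ ω', p ω' ∂μ) ^ 2 ∂μ) / (1 - ∫ ω, p ω ∂μ))) :
    a₀ ∈ Set.Ioo (0 : ℝ) 1 ∧ ∀ a ∈ Set.Ioo (0 : ℝ) 1, L a₀ ≤ L a := by
  set m : ℝ := ∫ ω, p ω ∂μ with hmdef
  -- integrability
  have hint_p : Integrable p μ := by
    refine Integrable.mono' (integrable_const 1) hm.aestronglyMeasurable ?_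
    filter_upwards with ω
    rw [Real.norm_eq_abs, abs_le]
    exact ⟨by linarith [(hp ω).1], (hp ω).2⟩
  have hint_sq : Integrable (fun ω => (p ω) ^ 2) μ := by
    refine Integrable.mono' (integrable_const 1) ((hm.pow_const 2).aestronglyMeasurable) ?_
    filter_upwards with ω
    rw [Real.norm_eq_abs, abs_le]
    constructor
    · nlinarith [sq_nonneg (p ω)]
    · nlinarith [(hp ω).1, (hp ω).2]
  set S : ℝ := ∫ ω, (p ω) ^ 2 ∂μ with hSdef
  have keyint : ∀ c : ℝ, ∫ ω, (p ω - c) ^ 2 ∂μ = S - 2 * c * m + c ^ 2 := by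
    intro c
    have hre : ∀ ω, (p ω - c) ^ 2 = ((p ω) ^ 2 - (2 * c) * p ω) + c ^ 2 := by
      intro ω; ring
    have h2 : Integrable (fun ω => 2 * c * p ω) μ := hint_p.const_mul _
    have h1 : Integrable (fun ω => p ω ^ 2 - 2 * c * p ω) μ := hint_sq.sub h2
    rw [integral_congr_ae (Filter.Eventually.of_forall hre),
      integral_add h1 (integrable_const _), integral_sub hint_sq h2,
      integral_const_mul, integral_const]
    simp [← hmdef, ← hSdef]
  set v : ℝ := ∫ ω, (p ω - m) ^ 2 ∂μ with hvdef
  have hvS : v = S - m ^ 2 := by rw [hvdef, keyint m]; ring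
  have hv0 : 0 ≤ v := integral_nonneg fun ω => sq_nonneg _
  have hLF : ∀ a : ℝ, L a = ecapF m v a := by
    intro a
    rw [hL a]
    have : ∀ ω, ((p ω - a) / min a (1 - a)) ^ 2 = (p ω - a) ^ 2 / (min a (1 - a)) ^ 2 := by
      intro ω; rw [div_pow]
    rw [integral_congr_ae (Filter.Eventually.of_forall this), integral_div, keyint a]
    unfold ecapF
    rw [hvS]
    ring_nf
  rcases le_or_gt m (1 / 2) with hc | hc
  · have ha₀' : a₀ = min (m + v / m) (1 / 2) := by rw [ha₀, if_pos hc]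
    obtain ⟨hmem, hmin⟩ := ecap_core m v hE0 hc hv0
    rw [ha₀']
    refine ⟨hmem, fun a ha => ?_⟩
    rw [hLF, hLF]
    exact hmin a ha
  · have h1m0 : 0 < 1 - m := by linarith
    have h1m2 : 1 - m ≤ 1 / 2 := by linarith
    obtain ⟨hmem, hmin⟩ := ecap_core (1 - m) v h1m0 h1m2 hv0
    set A : ℝ := min (1 - m + v / (1 - m)) (1 / 2) with hAdef
    have ha₀' : a₀ = 1 - A := by
      rw [ha₀, if_neg (not_le.2 hc), hAdef]
      rcases le_total (1 - m + v / (1 - m)) (1 / 2) with h | h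
      · rw [min_eq_left h, max_eq_right (by linarith)]
        ring
      · rw [min_eq_right h, max_eq_left (by linarith)]
        norm_num
    rw [ha₀']
    obtain ⟨hA0, hA1⟩ := hmem
    refine ⟨⟨by linarith, by linarith⟩, fun a ha => ?_⟩
    obtain ⟨ha0, ha1⟩ := ha
    rw [hLF, hLF, ecapF_mirror m v (1 - A), ecapF_mirror m v a]
    have h1A : (1 : ℝ) - (1 - A) = A := by ring
    rw [h1A]
    exact hmin (1 - a) ⟨by linarith, by linarith⟩
end

section
/- Let f be a probability density on (0,1) such that p̃(1-p̃)f(p̃) → 0 as p̃ → 0 and as p̃ → 1, and let g* = p̃(1-p̃) f'/f be its associated score transform. Then for any bounded continuously differentiable function g on [0,1], E[(g(p̃) - g*(p̃))²] = E[g(p̃)²] + 2E[g(p̃)(1 - 2p̃) + p̃(1-p̃)g'(p̃)] + C, where C = E[g*(p̃)²] does not depend on g. -/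
/-!
Expanding the square gives E[(g - g*)²] = E[g²] - 2E[g g*] + E[g*²], and g* f = p̃(1-p̃) f' on
(0,1), so the cross term is ∫ g p̃(1-p̃) f'. Since
(p̃(1-p̃) g f)' = (g(1-2p̃) + p̃(1-p̃)g') f + g p̃(1-p̃) f' and p̃(1-p̃) g f vanishes at both ends,
integrating by parts turns the cross term into -E[g(1-2p̃) + p̃(1-p̃)g'].
Integrability of g g* f follows from |g*| f ≤ (g*² + 1) f / 2, and g, g' are bounded on [0,1]
by compactness.
-/

open MeasureTheory Filter Set Topology

theorem Integrable.mul_of_integrable_sq_mul {α : Type*} [MeasurableSpace α] {μ : Measure α}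
    {φ f : α → ℝ} (hφ : AEStronglyMeasurable φ μ) (hf_nonneg : 0 ≤ᵐ[μ] f) (hf : Integrable f μ)
    (hφf : Integrable (fun x => φ x ^ 2 * f x) μ) : Integrable (fun x => φ x * f x) μ := by
  refine ((hφf.add hf).div_const 2).mono' (hφ.mul hf.aestronglyMeasurable) ?_
  filter_upwards [hf_nonneg] with x hx
  simp only [Real.norm_eq_abs, abs_mul, abs_of_nonneg hx, Pi.add_apply, Pi.zero_apply] at hx ⊢
  nlinarith [mul_nonneg hx (sq_nonneg (|φ x| - 1)), sq_abs (φ x)]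

theorem integral_Ioo_eq_zero_of_hasDerivAt_of_tendsto {a b : ℝ} (hab : a < b) {F F' : ℝ → ℝ}
    (hF : ∀ x ∈ Ioo a b, HasDerivAt F (F' x) x) (hF' : IntegrableOn F' (Ioo a b))
    (ha : Tendsto F (𝓝[Ioo a b] a) (𝓝 0)) (hb : Tendsto F (𝓝[Ioo a b] b) (𝓝 0)) :
    ∫ x in Ioo a b, F' x = 0 := by
  rw [nhdsWithin_Ioo_eq_nhdsGT hab] at ha
  rw [nhdsWithin_Ioo_eq_nhdsLT hab] at hb
  have hint : IntervalIntegrable F' volume a b :=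
    (intervalIntegrable_iff_integrableOn_Ioo_of_le hab.le).2 hF'
  have := intervalIntegral.integral_eq_sub_of_hasDerivAt_of_tendsto hab hF hint ha hb
  rwa [intervalIntegral.integral_of_le hab.le, integral_Ioc_eq_integral_Ioo, sub_zero] at this

theorem hasDerivAt_mul_one_sub_mul_mul {f g : ℝ → ℝ} {x : ℝ} (hf : DifferentiableAt ℝ f x)
    (hg : DifferentiableAt ℝ g x) :
    HasDerivAt (fun t => t * (1 - t) * g t * f t)
      ((g x * (1 - 2 * x) + x * (1 - x) * deriv g x) * f x + g x * (x * (1 - x) * deriv f x))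
      x := by
  have hw : HasDerivAt (fun t : ℝ => t * (1 - t)) (1 * (1 - x) + x * (0 - 1)) x :=
    (hasDerivAt_id x).mul ((hasDerivAt_const x 1).sub (hasDerivAt_id x))
  refine ((hw.mul hg.hasDerivAt).mul hf.hasDerivAt).congr_deriv ?_
  simp only [Pi.mul_apply]
  ring

theorem integral_Ioo_mul_weighted_deriv_eq_neg {f g : ℝ → ℝ}
    (hf_int : IntegrableOn f (Ioo 0 1)) (hf_diff : ∀ t ∈ Ioo (0 : ℝ) 1, DifferentiableAt ℝ f t)
    (hlim0 : Tendsto (fun t => t * (1 - t) * f t) (𝓝[Ioo 0 1] 0) (𝓝 0))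
    (hlim1 : Tendsto (fun t => t * (1 - t) * f t) (𝓝[Ioo 0 1] 1) (𝓝 0))
    (hg : ContDiff ℝ 1 g)
    (hgf' : IntegrableOn (fun t => g t * (t * (1 - t) * deriv f t)) (Ioo 0 1)) :
    ∫ t in Ioo (0 : ℝ) 1, g t * (t * (1 - t) * deriv f t)
      = -∫ t in Ioo (0 : ℝ) 1, (g t * (1 - 2 * t) + t * (1 - t) * deriv g t) * f t := by
  have hφf : IntegrableOn (fun t => (g t * (1 - 2 * t) + t * (1 - t) * deriv g t) * f t)
      (Ioo 0 1) := by
    have hφ : Continuous fun t => g t * (1 - 2 * t) + t * (1 - t) * deriv g t := by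
      have hg_cont := hg.continuous
      have hg'_cont := hg.continuous_deriv le_rfl
      fun_prop
    exact hf_int.continuousOn_mul_of_subset hφ.continuousOn isCompact_Icc measurableSet_Ioo
      Ioo_subset_Icc_self
  have hboundary (a : ℝ) (ha : Tendsto (fun t => t * (1 - t) * f t) (𝓝[Ioo 0 1] a) (𝓝 0)) :
      Tendsto (fun t => t * (1 - t) * g t * f t) (𝓝[Ioo 0 1] a) (𝓝 0) := by
    have := ha.mul (hg.continuous.tendsto a |>.mono_left nhdsWithin_le_nhds)
    rw [zero_mul] at this
    exact this.congr fun t => by ring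
  have := integral_Ioo_eq_zero_of_hasDerivAt_of_tendsto zero_lt_one
    (fun x hx => hasDerivAt_mul_one_sub_mul_mul (hf_diff x hx) (hg.differentiable one_ne_zero x))
    (hφf.add hgf') (hboundary 0 hlim0) (hboundary 1 hlim1)
  rw [integral_add hφf hgf'] at this
  linarith

theorem risk_identity_general (f : ℝ → ℝ)
    (hf_pos : ∀ t ∈ Set.Ioo (0 : ℝ) 1, 0 < f t)
    (hf_int : IntegrableOn f (Set.Ioo (0 : ℝ) 1))
    (hf_diff : ∀ t ∈ Set.Ioo (0 : ℝ) 1, DifferentiableAt ℝ f t)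
    (hlim0 : Tendsto (fun t => t * (1 - t) * f t)
      (nhdsWithin 0 (Set.Ioo (0 : ℝ) 1)) (nhds 0))
    (hlim1 : Tendsto (fun t => t * (1 - t) * f t)
      (nhdsWithin 1 (Set.Ioo (0 : ℝ) 1)) (nhds 0))
    (gs : ℝ → ℝ) (hgs : ∀ t, gs t = t * (1 - t) * deriv f t / f t)
    (hgs_int : IntegrableOn (fun t => (gs t) ^ 2 * f t) (Set.Ioo (0 : ℝ) 1))
    (g : ℝ → ℝ) (hg_smooth : ContDiff ℝ 1 g) :
    ∫ t in Set.Ioo (0 : ℝ) 1, (g t - gs t) ^ 2 * f t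
      = (∫ t in Set.Ioo (0 : ℝ) 1, (g t) ^ 2 * f t)
        + 2 * (∫ t in Set.Ioo (0 : ℝ) 1,
            (g t * (1 - 2 * t) + t * (1 - t) * deriv g t) * f t)
        + ∫ t in Set.Ioo (0 : ℝ) 1, (gs t) ^ 2 * f t := by
  have hscore : EqOn (fun t => gs t * f t) (fun t => t * (1 - t) * deriv f t) (Ioo 0 1) :=
    fun t ht => by simp only [hgs t, div_mul_cancel₀ _ (hf_pos t ht).ne']
  have hgs_meas : AEStronglyMeasurable gs (volume.restrict (Ioo 0 1)) := by
    rw [funext hgs]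
    exact ((by fun_prop : Measurable fun t : ℝ => t * (1 - t) * deriv f t).aemeasurable.div
      hf_int.aestronglyMeasurable.aemeasurable).aestronglyMeasurable
  have hgs_f : IntegrableOn (fun t => gs t * f t) (Ioo 0 1) :=
    Integrable.mul_of_integrable_sq_mul hgs_meas
      (ae_restrict_of_forall_mem measurableSet_Ioo fun t ht => (hf_pos t ht).le) hf_int hgs_int
  have hg_cont : ContinuousOn g (Icc 0 1) := hg_smooth.continuous.continuousOn
  have hg_gs_f : IntegrableOn (fun t => g t * (gs t * f t)) (Ioo 0 1) :=
    hgs_f.continuousOn_mul_of_subset hg_cont isCompact_Icc measurableSet_Ioo Ioo_subset_Icc_self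
  have hg2_f : IntegrableOn (fun t => g t ^ 2 * f t) (Ioo 0 1) :=
    hf_int.continuousOn_mul_of_subset (hg_cont.pow 2) isCompact_Icc measurableSet_Ioo
      Ioo_subset_Icc_self
  have hexpand : ∫ t in Ioo (0 : ℝ) 1, (g t - gs t) ^ 2 * f t
      = (∫ t in Ioo (0 : ℝ) 1, g t ^ 2 * f t) - 2 * (∫ t in Ioo (0 : ℝ) 1, g t * (gs t * f t))
        + ∫ t in Ioo (0 : ℝ) 1, gs t ^ 2 * f t := by
    have hdiff : IntegrableOn (fun t => g t ^ 2 * f t - 2 * (g t * (gs t * f t))) (Ioo 0 1) :=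
      hg2_f.sub (hg_gs_f.const_mul 2)
    rw [← integral_const_mul, ← integral_sub hg2_f (hg_gs_f.const_mul 2),
      ← integral_add hdiff hgs_int]
    congr 1 with t
    ring
  have hcross : ∫ t in Ioo (0 : ℝ) 1, g t * (gs t * f t)
      = ∫ t in Ioo (0 : ℝ) 1, g t * (t * (1 - t) * deriv f t) :=
    setIntegral_congr_fun measurableSet_Ioo fun t ht => congrArg (g t * ·) (hscore ht)
  have hparts := integral_Ioo_mul_weighted_deriv_eq_neg hf_int hf_diff hlim0 hlim1 hg_smooth
    (hg_gs_f.congr_fun (fun t ht => congrArg (g t * ·) (hscore ht)) measurableSet_Ioo)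
  rw [hexpand, hcross, hparts]
  ring

/-- Risk identity: for any bounded `C¹` function `g`,
`E[(g(p̃) - g*(p̃))²] = E[g(p̃)²] + 2E[g(p̃)(1-2p̃) + p̃(1-p̃)g'(p̃)] + C`
with `C = E[g*(p̃)²]`, where `g* = p̃(1-p̃) f'/f`. -/
theorem risk_identity (f : ℝ → ℝ)
    (hf_pos : ∀ t ∈ Set.Ioo (0 : ℝ) 1, 0 < f t)
    (hf_density : ∫ t in Set.Ioo (0 : ℝ) 1, f t = 1)
    (hf_int : IntegrableOn f (Set.Ioo (0 : ℝ) 1))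
    (hf_diff : ∀ t ∈ Set.Ioo (0 : ℝ) 1, DifferentiableAt ℝ f t)
    (hlim0 : Tendsto (fun t => t * (1 - t) * f t)
      (nhdsWithin 0 (Set.Ioo (0 : ℝ) 1)) (nhds 0))
    (hlim1 : Tendsto (fun t => t * (1 - t) * f t)
      (nhdsWithin 1 (Set.Ioo (0 : ℝ) 1)) (nhds 0))
    (gs : ℝ → ℝ) (hgs : ∀ t, gs t = t * (1 - t) * deriv f t / f t)
    (hgs_int : IntegrableOn (fun t => (gs t) ^ 2 * f t) (Set.Ioo (0 : ℝ) 1))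
    (g : ℝ → ℝ) (hg_bdd : ∃ M, ∀ t, |g t| ≤ M) (hg_smooth : ContDiff ℝ 1 g) :
    ∫ t in Set.Ioo (0 : ℝ) 1, (g t - gs t) ^ 2 * f t
      = (∫ t in Set.Ioo (0 : ℝ) 1, (g t) ^ 2 * f t)
        + 2 * (∫ t in Set.Ioo (0 : ℝ) 1,
            (g t * (1 - 2 * t) + t * (1 - t) * deriv g t) * f t)
        + ∫ t in Set.Ioo (0 : ℝ) 1, (gs t) ^ 2 * f t :=
  risk_identity_general f hf_pos hf_int hf_diff hlim0 hlim1 gs hgs hgs_int g hg_smooth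
end

section
/- Under the beta model, Tweedie's formula yields E[p | p̃] = p̃ + γ(g*(p̃) + 1 - 2p̃), where g*(p̃) = p̃(1-p̃) f'(p̃)/f(p̃) and f is the marginal density of p̃. -/
/-!
Differentiating the beta kernel `t ^ a * (1 - t) ^ b` in `t` multiplies it by its logarithmic
derivative `a / t - b / (1 - t)`. For `a = p/γ - 1`, `b = (1-p)/γ - 1` this becomes, after scaling
by `γ t (1 - t)`, the affine function `p - (t + γ (1 - 2t))` of `p`: this is the exponential-family
structure behind Tweedie's formula. Differentiating the marginal `f` under the integral sign thus
gives `γ t (1 - t) f'(t) = N(t) - (t + γ (1 - 2t)) f(t)`, where `N(t) / f(t)` is the posterior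
mean; dividing by `f t` gives the formula. Differentiation under the integral is legitimate
because, for `s` near `t` and bounded exponents, both the kernel at `s` and its `s`-derivative are
bounded by a constant multiple of the kernel at `t`.
-/

open MeasureTheory Set Metric

theorem Real.rpow_le_two_rpow_of_abs_le {x e C : ℝ} (hx₁ : 1 / 2 ≤ x) (hx₂ : x ≤ 2)
    (he : |e| ≤ C) : x ^ e ≤ 2 ^ C := by
  have hx₀ : 0 < x := by linarith
  have hlog : |Real.log x| ≤ Real.log 2 := by
    rw [abs_le]
    constructor
    · have := Real.log_le_log (by norm_num) hx₁
      rwa [one_div, Real.log_inv] at this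
    · exact Real.log_le_log hx₀ hx₂
  rw [Real.rpow_def_of_pos hx₀, Real.rpow_def_of_pos two_pos, Real.exp_le_exp]
  calc Real.log x * e ≤ |Real.log x| * |e| := (le_abs_self _).trans (abs_mul _ _).le
    _ ≤ Real.log 2 * C := mul_le_mul hlog he (abs_nonneg _) (Real.log_nonneg one_le_two)

theorem Real.rpow_eq_div_rpow_mul {x y : ℝ} (hx : 0 ≤ x) (hy : 0 < y) (e : ℝ) :
    x ^ e = (x / y) ^ e * y ^ e := by
  rw [← Real.mul_rpow (div_nonneg hx hy.le) hy.le, div_mul_cancel₀ x hy.ne']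

theorem rpow_mul_one_sub_rpow_le {a b C s t : ℝ} (ht : t ∈ Ioo (0 : ℝ) 1)
    (hs : |s - t| ≤ min t (1 - t) / 2) (ha : |a| ≤ C) (hb : |b| ≤ C) :
    s ^ a * (1 - s) ^ b ≤ 2 ^ C * 2 ^ C * (t ^ a * (1 - t) ^ b) := by
  obtain ⟨ht₀, ht₁⟩ := ht
  have h1t : 0 < 1 - t := sub_pos.2 ht₁
  have hmin₁ := min_le_left t (1 - t)
  have hmin₂ := min_le_right t (1 - t)
  obtain ⟨hs₁, hs₂⟩ := abs_le.1 hs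
  have hratio₁ : s / t ≤ 2 := (div_le_iff₀ ht₀).2 (by linarith)
  have hratio₂ : 1 / 2 ≤ s / t := (le_div_iff₀ ht₀).2 (by linarith)
  have hratio₃ : (1 - s) / (1 - t) ≤ 2 := (div_le_iff₀ h1t).2 (by linarith)
  have hratio₄ : 1 / 2 ≤ (1 - s) / (1 - t) := (le_div_iff₀ h1t).2 (by linarith)
  rw [Real.rpow_eq_div_rpow_mul (by linarith) ht₀ a,
    Real.rpow_eq_div_rpow_mul (by linarith) h1t b]
  calc (s / t) ^ a * t ^ a * (((1 - s) / (1 - t)) ^ b * (1 - t) ^ b)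
      = (s / t) ^ a * ((1 - s) / (1 - t)) ^ b * (t ^ a * (1 - t) ^ b) := by ring
    _ ≤ 2 ^ C * 2 ^ C * (t ^ a * (1 - t) ^ b) := by
      gcongr
      · exact Real.rpow_le_two_rpow_of_abs_le hratio₂ hratio₁ ha
      · exact Real.rpow_le_two_rpow_of_abs_le hratio₄ hratio₃ hb

theorem abs_div_sub_div_one_sub_le {a b C s t : ℝ} (ht : t ∈ Ioo (0 : ℝ) 1)
    (hs : |s - t| ≤ min t (1 - t) / 2) (ha : |a| ≤ C) (hb : |b| ≤ C) :
    |a / s - b / (1 - s)| ≤ 4 * C / min t (1 - t) := by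
  obtain ⟨ht₀, ht₁⟩ := ht
  have hm : 0 < min t (1 - t) := lt_min ht₀ (sub_pos.2 ht₁)
  have hmin₁ := min_le_left t (1 - t)
  have hmin₂ := min_le_right t (1 - t)
  obtain ⟨hs₁, hs₂⟩ := abs_le.1 hs
  have hs₀ : min t (1 - t) / 2 ≤ s := by linarith
  have h1s : min t (1 - t) / 2 ≤ 1 - s := by linarith
  have hC : 0 ≤ C := (abs_nonneg a).trans ha
  have bound : ∀ x y : ℝ, |x| ≤ C → min t (1 - t) / 2 ≤ y → |x / y| ≤ 2 * C / min t (1 - t) :=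
    fun x y hx hy => by
      rw [abs_div, abs_of_pos (show 0 < y by linarith), div_le_div_iff₀ (by linarith) hm]
      nlinarith [mul_le_mul_of_nonneg_right hx hm.le, mul_le_mul_of_nonneg_left hy hC]
  calc |a / s - b / (1 - s)| ≤ |a / s| + |b / (1 - s)| := abs_sub _ _
    _ ≤ 2 * C / min t (1 - t) + 2 * C / min t (1 - t) :=
      add_le_add (bound a s ha hs₀) (bound b (1 - s) hb h1s)
    _ = 4 * C / min t (1 - t) := by ring

theorem hasDerivAt_rpow_mul_one_sub_rpow {a b s : ℝ} (hs : s ∈ Ioo (0 : ℝ) 1) :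
    HasDerivAt (fun x : ℝ => x ^ a * (1 - x) ^ b)
      ((a / s - b / (1 - s)) * (s ^ a * (1 - s) ^ b)) s := by
  obtain ⟨hs₀, hs₁⟩ := hs
  have h1s : 0 < 1 - s := sub_pos.2 hs₁
  have hleft := Real.hasDerivAt_rpow_const (p := a) (Or.inl hs₀.ne')
  have hright := (Real.hasDerivAt_rpow_const (p := b) (Or.inl h1s.ne')).comp s
    ((hasDerivAt_id s).const_sub 1)
  refine (hleft.mul hright).congr_deriv ?_
  simp only [Function.comp_apply, Real.rpow_sub_one hs₀.ne', Real.rpow_sub_one h1s.ne']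
  field_simp
  ring

theorem hasDerivAt_integral_rpow_mul_one_sub_rpow_mul {α : Type*} [MeasurableSpace α]
    {μ : Measure α} {u v w : α → ℝ} {C t : ℝ} (hu : Measurable u) (hv : Measurable v)
    (hu_le : ∀ᵐ p ∂μ, |u p| ≤ C) (hv_le : ∀ᵐ p ∂μ, |v p| ≤ C) (ht : t ∈ Ioo (0 : ℝ) 1)
    (hint : Integrable (fun p => t ^ u p * (1 - t) ^ v p * w p) μ) :
    HasDerivAt (fun s => ∫ p, s ^ u p * (1 - s) ^ v p * w p ∂μ)
      (∫ p, (u p / t - v p / (1 - t)) * (t ^ u p * (1 - t) ^ v p * w p) ∂μ) t := by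
  set δ := min t (1 - t) / 2 with hδ_def
  have hδ : 0 < δ := half_pos (lt_min ht.1 (sub_pos.2 ht.2))
  have hball : ∀ s ∈ ball t δ, |s - t| ≤ δ ∧ s ∈ Ioo (0 : ℝ) 1 := fun s hs => by
    rw [mem_ball, Real.dist_eq] at hs
    have := min_le_left t (1 - t)
    have := min_le_right t (1 - t)
    obtain ⟨hs₁, hs₂⟩ := abs_lt.1 hs
    rw [hδ_def] at hs₁ hs₂
    exact ⟨hs.le, by linarith, by linarith⟩
  have hmeas : ∀ s ∈ ball t δ,
      AEStronglyMeasurable (fun p => s ^ u p * (1 - s) ^ v p * w p) μ := fun s hs => by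
    obtain ⟨hs₀, hs₁⟩ := (hball s hs).2
    have hfactor : (fun p => s ^ u p * (1 - s) ^ v p * w p) = fun p =>
        (s / t) ^ u p * ((1 - s) / (1 - t)) ^ v p * (t ^ u p * (1 - t) ^ v p * w p) := by
      funext p
      rw [Real.rpow_eq_div_rpow_mul hs₀.le ht.1 (u p),
        Real.rpow_eq_div_rpow_mul (sub_pos.2 hs₁).le (sub_pos.2 ht.2) (v p)]
      ring
    rw [hfactor]
    exact ((measurable_const.pow hu).mul (measurable_const.pow hv)).aestronglyMeasurable.mul
      hint.aestronglyMeasurable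
  have hbound : ∀ᵐ p ∂μ, ∀ s ∈ ball t δ,
      ‖(u p / s - v p / (1 - s)) * (s ^ u p * (1 - s) ^ v p * w p)‖ ≤
        4 * C / min t (1 - t) * (2 ^ C * 2 ^ C) * ‖t ^ u p * (1 - t) ^ v p * w p‖ := by
    filter_upwards [hu_le, hv_le] with p hup hvp s hs
    obtain ⟨hst, hs₀, hs₁⟩ := hball s hs
    have hK : 0 ≤ s ^ u p * (1 - s) ^ v p :=
      mul_nonneg (Real.rpow_nonneg hs₀.le _) (Real.rpow_nonneg (sub_pos.2 hs₁).le _)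
    have hKt : 0 ≤ t ^ u p * (1 - t) ^ v p :=
      mul_nonneg (Real.rpow_nonneg ht.1.le _) (Real.rpow_nonneg (sub_pos.2 ht.2).le _)
    simp only [Real.norm_eq_abs, abs_mul, abs_of_nonneg hK, abs_of_nonneg hKt]
    calc |u p / s - v p / (1 - s)| * (s ^ u p * (1 - s) ^ v p * |w p|)
        ≤ 4 * C / min t (1 - t) * (2 ^ C * 2 ^ C * (t ^ u p * (1 - t) ^ v p) * |w p|) := by
          refine mul_le_mul (abs_div_sub_div_one_sub_le ht hst hup hvp)
            (mul_le_mul_of_nonneg_right (rpow_mul_one_sub_rpow_le ht hst hup hvp) (abs_nonneg _))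
            (by positivity)
            (div_nonneg (by linarith [abs_nonneg (u p)]) (lt_min ht.1 (sub_pos.2 ht.2)).le)
      _ = _ := by ring
  have hdiff : ∀ᵐ p ∂μ, ∀ s ∈ ball t δ, HasDerivAt (fun s => s ^ u p * (1 - s) ^ v p * w p)
      ((u p / s - v p / (1 - s)) * (s ^ u p * (1 - s) ^ v p * w p)) s :=
    Filter.Eventually.of_forall fun p s hs => by
      simpa only [mul_assoc] using
        (hasDerivAt_rpow_mul_one_sub_rpow (a := u p) (b := v p) (hball s hs).2).mul_const (w p)
  exact (hasDerivAt_integral_of_dominated_loc_of_deriv_le (ball_mem_nhds t hδ)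
    (Filter.eventually_of_mem (ball_mem_nhds t hδ) hmeas) hint
    ((((hu.div_const t).sub (hv.div_const (1 - t))).aestronglyMeasurable).mul
      hint.aestronglyMeasurable) hbound (hint.norm.const_mul _) hdiff).2

theorem abs_div_sub_one_le_inv_add_one {x γ : ℝ} (hγ : 0 < γ) (hx : x ∈ Icc (0 : ℝ) 1) :
    |x / γ - 1| ≤ 1 / γ + 1 := by
  have h₀ : 0 ≤ x / γ := div_nonneg hx.1 hγ.le
  have h₁ : x / γ ≤ 1 / γ := div_le_div_of_nonneg_right hx.2 hγ.le
  exact abs_le.2 ⟨by linarith, by linarith⟩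

/-- The unnormalised density of `Beta(p/γ, (1-p)/γ)` at `t`. -/
noncomputable def betaKernel (γ p t : ℝ) : ℝ :=
  t ^ (p / γ - 1) * (1 - t) ^ ((1 - p) / γ - 1)

noncomputable def betaMixture (γ : ℝ) (w : ℝ → ℝ) (t : ℝ) : ℝ :=
  ∫ p in Ioo (0 : ℝ) 1, betaKernel γ p t * w p

theorem hasDerivAt_betaMixture {γ t : ℝ} {w : ℝ → ℝ} (hγ : 0 < γ) (ht : t ∈ Ioo (0 : ℝ) 1)
    (hint : Integrable (fun p => betaKernel γ p t * w p) (volume.restrict (Ioo 0 1))) :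
    HasDerivAt (betaMixture γ w)
      (∫ p in Ioo (0 : ℝ) 1,
        ((p / γ - 1) / t - ((1 - p) / γ - 1) / (1 - t)) * (betaKernel γ p t * w p)) t := by
  have hexp : ∀ᵐ p ∂volume.restrict (Ioo (0 : ℝ) 1),
      |p / γ - 1| ≤ 1 / γ + 1 ∧ |(1 - p) / γ - 1| ≤ 1 / γ + 1 := by
    filter_upwards [ae_restrict_mem measurableSet_Ioo] with p ⟨hp₀, hp₁⟩
    exact ⟨abs_div_sub_one_le_inv_add_one hγ ⟨hp₀.le, hp₁.le⟩,
      abs_div_sub_one_le_inv_add_one hγ ⟨by linarith, by linarith⟩⟩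
  exact hasDerivAt_integral_rpow_mul_one_sub_rpow_mul (by fun_prop) (by fun_prop)
    (hexp.mono fun _ hp => hp.1) (hexp.mono fun _ hp => hp.2) ht hint

theorem integrable_of_betaMixture_ne_zero {γ t : ℝ} {w : ℝ → ℝ} (h : betaMixture γ w t ≠ 0) :
    Integrable (fun p => betaKernel γ p t * w p) (volume.restrict (Ioo 0 1)) := by
  by_contra hnot
  exact h (integral_undef hnot)

theorem mul_logDeriv_betaKernel_eq {γ t : ℝ} (hγ : γ ≠ 0) (ht : t ∈ Ioo (0 : ℝ) 1) (p : ℝ) :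
    γ * t * (1 - t) * ((p / γ - 1) / t - ((1 - p) / γ - 1) / (1 - t)) =
      p - (t + γ * (1 - 2 * t)) := by
  field_simp [ht.1.ne', (sub_pos.2 ht.2).ne']
  ring

theorem MeasureTheory.Integrable.id_mul_restrict_Ioo {F : ℝ → ℝ}
    (hF : Integrable F (volume.restrict (Ioo 0 1))) :
    Integrable (fun p => p * F p) (volume.restrict (Ioo 0 1)) := by
  refine hF.bdd_mul (c := 1) aestronglyMeasurable_id ?_
  filter_upwards [ae_restrict_mem measurableSet_Ioo] with p ⟨hp₀, hp₁⟩
  rw [Real.norm_eq_abs, abs_of_pos hp₀]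
  exact hp₁.le

theorem mul_deriv_betaMixture {γ t : ℝ} {w : ℝ → ℝ} (hγ : 0 < γ) (ht : t ∈ Ioo (0 : ℝ) 1)
    (hint : Integrable (fun p => betaKernel γ p t * w p) (volume.restrict (Ioo 0 1))) :
    γ * t * (1 - t) * deriv (betaMixture γ w) t =
      betaMixture γ (fun p => p * w p) t - (t + γ * (1 - 2 * t)) * betaMixture γ w t := by
  have hmean : betaMixture γ (fun p => p * w p) t =
      ∫ p in Ioo (0 : ℝ) 1, p * (betaKernel γ p t * w p) := by
    simp only [betaMixture, mul_left_comm]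
  rw [(hasDerivAt_betaMixture hγ ht hint).deriv, ← integral_const_mul, hmean, betaMixture,
    ← integral_const_mul, ← integral_sub hint.id_mul_restrict_Ioo (hint.const_mul _)]
  congr 1 with p
  rw [← mul_assoc, mul_logDeriv_betaKernel_eq hγ.ne' ht, sub_mul]

theorem tweedie_mean_general (γ : ℝ) (hγ : 0 < γ) (h : ℝ → ℝ)
    (B : ℝ → ℝ) (f : ℝ → ℝ)
    (hf : ∀ t, f t = ∫ pr in Set.Ioo (0 : ℝ) 1,
      t ^ (pr / γ - 1) * (1 - t) ^ ((1 - pr) / γ - 1) / B pr * h pr)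
    (g : ℝ → ℝ)
    (hg : ∀ t, g t = t * (1 - t) * deriv f t / f t) :
    ∀ t ∈ Set.Ioo (0 : ℝ) 1, f t ≠ 0 →
      (∫ pr in Set.Ioo (0 : ℝ) 1,
          pr * (t ^ (pr / γ - 1) * (1 - t) ^ ((1 - pr) / γ - 1) / B pr) * h pr)
        / f t
      = t + γ * (g t + 1 - 2 * t) := by
  intro t ht hft
  have hf_mixture : f = betaMixture γ (fun p => h p / B p) := funext fun s => by
    rw [hf, betaMixture]
    congr 1 with p
    simp only [betaKernel]
    ring
  have hmean : (∫ pr in Set.Ioo (0 : ℝ) 1,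
      pr * (t ^ (pr / γ - 1) * (1 - t) ^ ((1 - pr) / γ - 1) / B pr) * h pr) =
        betaMixture γ (fun p => p * (h p / B p)) t := by
    rw [betaMixture]
    congr 1 with p
    simp only [betaKernel]
    ring
  subst hf_mixture
  have htweedie := mul_deriv_betaMixture hγ ht (integrable_of_betaMixture_ne_zero hft)
  rw [hmean, hg]
  field_simp at htweedie ⊢
  linear_combination -htweedie

/-- Tweedie mean formula under the beta model:
`E[p | p̃] = p̃ + γ(g*(p̃) + 1 - 2p̃)` where `g*(p̃) = p̃(1-p̃) f'(p̃)/f(p̃)`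
and `f` is the marginal density of `p̃`. -/
theorem tweedie_mean (γ : ℝ) (hγ : 0 < γ) (h : ℝ → ℝ)
    (hh_nonneg : ∀ x, 0 ≤ h x) (hh_bdd : ∃ M, ∀ x, h x ≤ M)
    (hh_density : ∫ x in Set.Icc (0 : ℝ) 1, h x = 1)
    (B : ℝ → ℝ)
    (hB : ∀ pr, B pr = ∫ x in Set.Ioo (0 : ℝ) 1,
      x ^ (pr / γ - 1) * (1 - x) ^ ((1 - pr) / γ - 1))
    (f : ℝ → ℝ)
    (hf : ∀ t, f t = ∫ pr in Set.Ioo (0 : ℝ) 1,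
      t ^ (pr / γ - 1) * (1 - t) ^ ((1 - pr) / γ - 1) / B pr * h pr)
    (g : ℝ → ℝ)
    (hg : ∀ t, g t = t * (1 - t) * deriv f t / f t) :
    ∀ t ∈ Set.Ioo (0 : ℝ) 1, f t ≠ 0 →
      (∫ pr in Set.Ioo (0 : ℝ) 1,
          pr * (t ^ (pr / γ - 1) * (1 - t) ^ ((1 - pr) / γ - 1) / B pr) * h pr)
        / f t
      = t + γ * (g t + 1 - 2 * t) :=
  tweedie_mean_general γ hγ h B f hf g hg
end

section
/- For every θ ∈ [-4, 2], the function h_θ(x) = (1 - 0.5θ)x - θ(x³ - 1.5x²) is monotone (strictly increasing for θ ∈ (-4,2), hence injective) on [0,1]. -/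
/-- The ECAP bias-correction link function. -/
noncomputable def hLink (θ x : ℝ) : ℝ := (1 - 0.5 * θ) * x - θ * (x ^ 3 - 1.5 * x ^ 2)

/-!
The derivative `h_θ'(x) = 1 - θ/2 + 3θ·x(1 - x)` is affine in `t = x(1 - x) ∈ [0, 1/4]`, with value
`1 - θ/2` at `t = 0` and `1 + θ/4` at `t = 1/4`. Since `1 - 4t = (1 - 2x)²`, this gives
`h_θ'(x) = (1 - θ/2)(1 - 2x)² + (4 + θ)·x(1 - x)`, a sum of two nonnegative terms for `θ ∈ [-4, 2]`,
and positive inside `(0, 1)` when `θ ∈ (-4, 2)`. Monotonicity follows from the mean value theorem.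
-/

open Set

noncomputable def hLinkDeriv (θ x : ℝ) : ℝ := 1 - 0.5 * θ - 3 * θ * x ^ 2 + 3 * θ * x

theorem hasDerivAt_hLink (θ x : ℝ) : HasDerivAt (hLink θ) (hLinkDeriv θ x) x := by
  have h := ((hasDerivAt_id' x).const_mul (1 - 0.5 * θ)).fun_sub
    (((hasDerivAt_pow 3 x).fun_sub ((hasDerivAt_pow 2 x).const_mul 1.5)).const_mul θ)
  refine h.congr_deriv ?_
  simp only [hLinkDeriv]
  norm_num
  ring

theorem continuous_hLink (θ : ℝ) : Continuous (hLink θ) :=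
  continuous_iff_continuousAt.2 fun x ↦ (hasDerivAt_hLink θ x).continuousAt

theorem hLinkDeriv_eq (θ x : ℝ) :
    hLinkDeriv θ x = (1 - θ / 2) * (1 - 2 * x) ^ 2 + (4 + θ) * (x * (1 - x)) := by
  simp only [hLinkDeriv]
  ring

theorem hLinkDeriv_nonneg {θ x : ℝ} (hθ : θ ∈ Icc (-4) 2) (hx : x ∈ Icc 0 1) :
    0 ≤ hLinkDeriv θ x := by
  obtain ⟨hθ₁, hθ₂⟩ := hθ
  obtain ⟨hx₀, hx₁⟩ := hx
  rw [hLinkDeriv_eq]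
  exact add_nonneg (mul_nonneg (by linarith) (sq_nonneg _))
    (mul_nonneg (by linarith) (mul_nonneg hx₀ (by linarith)))

theorem hLinkDeriv_pos {θ x : ℝ} (hθ : θ ∈ Ioo (-4) 2) (hx : x ∈ Ioo 0 1) :
    0 < hLinkDeriv θ x := by
  obtain ⟨hθ₁, hθ₂⟩ := hθ
  obtain ⟨hx₀, hx₁⟩ := hx
  rw [hLinkDeriv_eq]
  exact add_pos_of_nonneg_of_pos (mul_nonneg (by linarith) (sq_nonneg _))
    (mul_pos (by linarith) (mul_pos hx₀ (by linarith)))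

/-- For `θ ∈ [-4, 2]`, `h_θ` is monotone on `[0,1]`; for `θ ∈ (-4,2)` it is
strictly increasing, hence injective, on `[0,1]`. -/
theorem hLink_monotone :
    (∀ θ ∈ Set.Icc (-4 : ℝ) 2, MonotoneOn (hLink θ) (Set.Icc (0 : ℝ) 1)) ∧
    (∀ θ ∈ Set.Ioo (-4 : ℝ) 2, StrictMonoOn (hLink θ) (Set.Icc (0 : ℝ) 1) ∧
      Set.InjOn (hLink θ) (Set.Icc (0 : ℝ) 1)) := by
  refine ⟨fun θ hθ ↦ ?_, fun θ hθ ↦ ?_⟩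
  · exact monotoneOn_of_hasDerivWithinAt_nonneg (convex_Icc 0 1)
      (continuous_hLink θ).continuousOn (fun x _ ↦ (hasDerivAt_hLink θ x).hasDerivWithinAt)
      fun x hx ↦ hLinkDeriv_nonneg hθ (interior_subset hx)
  · have hmono : StrictMonoOn (hLink θ) (Icc 0 1) :=
      strictMonoOn_of_hasDerivWithinAt_pos (convex_Icc 0 1) (continuous_hLink θ).continuousOn
        (fun x _ ↦ (hasDerivAt_hLink θ x).hasDerivWithinAt)
        fun x hx ↦ hLinkDeriv_pos hθ (by rwa [interior_Icc] at hx)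
    exact ⟨hmono, hmono.injOn⟩
end
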